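/- For every positive integer i, the function g(θ) = 2|ψ^(i)(θ)| − |ψ^(i)(θ²)| is strictly increasing on (0, 1), satisfies g(1) = |ψ^(i)(1)| > 0, and tends to −∞ as θ → 0⁺; consequently g has a unique zero θ_i in (0, 1). -/

import Mathlib

noncomputable def digamma : ℝ → ℝ := deriv (fun x => Real.log (Real.Gamma x))

noncomputable def polygamma (i : ℕ) : ℝ → ℝ := iteratedDeriv i digamma

/-!
Differentiating Euler's series `log Γ(x) = -log x + ∑ₘ (x log(1 + 1/(m+1)) - log(1 + x/(m+1)))`
termwise gives, for `x > 0` and `i ≥ 1`, `ψ⁽ⁱ⁾(x) = (-1)^(i+1) i! ζ(i+1, x)` with the Hurwitz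
series `ζ(k, x) = ∑ₙ (x + n)^(-k)`. Hence, with `k = i + 1`,
`g(θ) = i! (2 ζ(k, θ) - ζ(k, θ²))` and `g'(θ) = 2 k i! (θ ζ(k+1, θ²) - ζ(k+1, θ))`.
This is positive on `(0, 1)` because `x ζ(k+1, x)` is strictly decreasing there: its derivative
`ζ(k+1, x) - (k+1) x ζ(k+2, x)` is negative: `(k+1) x ζ(k+2, x)` contains `k + 1 ≥ 3` copies of
the leading term `x^(-k-1)` of `ζ(k+1, x)`, whose tail is at most `ζ(2) < 2 < 2 x^(-k-1)`.
Near `0`, `g(θ) ≤ i! (2(u + 2) - u²)` with `u = θ^(-k) → ∞`, and the zero comes from the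
intermediate value theorem.
-/

open Real Filter Set
open scoped Topology Nat

noncomputable def hurwitzSeries (k : ℕ) (x : ℝ) : ℝ := ∑' n : ℕ, ((x + n) ^ k)⁻¹

section HurwitzSeries

variable {k : ℕ} {x : ℝ}

lemma hasSum_inv_succ_sq : HasSum (fun n : ℕ => (((n : ℝ) + 1) ^ 2)⁻¹) (π ^ 2 / 6) := by
  simpa using (hasSum_nat_add_iff' 1).2 hasSum_zeta_two

lemma inv_add_succ_pow_le (hk : 2 ≤ k) (hx : 0 ≤ x) (n : ℕ) :
    ((x + (n + 1)) ^ k)⁻¹ ≤ (((n : ℝ) + 1) ^ 2)⁻¹ := by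
  have hn : (1 : ℝ) ≤ n + 1 := by linarith [n.cast_nonneg (α := ℝ)]
  gcongr
  calc ((n : ℝ) + 1) ^ 2 ≤ ((n : ℝ) + 1) ^ k := pow_le_pow_right₀ hn hk
    _ ≤ (x + (n + 1)) ^ k := pow_le_pow_left₀ (by positivity) (by linarith) k

lemma summable_inv_add_succ_pow (hk : 2 ≤ k) (hx : 0 ≤ x) :
    Summable (fun n : ℕ => ((x + (n + 1)) ^ k)⁻¹) :=
  .of_nonneg_of_le (fun n => by positivity) (inv_add_succ_pow_le hk hx)
    hasSum_inv_succ_sq.summable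

lemma summable_inv_add_pow (hk : 2 ≤ k) (hx : 0 ≤ x) :
    Summable (fun n : ℕ => ((x + n) ^ k)⁻¹) := by
  rw [← summable_nat_add_iff 1]
  simpa only [Nat.cast_add, Nat.cast_one] using summable_inv_add_succ_pow hk hx

lemma hurwitzSeries_eq_inv_pow_add_tsum (hk : 2 ≤ k) (hx : 0 ≤ x) :
    hurwitzSeries k x = (x ^ k)⁻¹ + ∑' n : ℕ, ((x + (n + 1)) ^ k)⁻¹ := by
  rw [hurwitzSeries, (summable_inv_add_pow hk hx).tsum_eq_zero_add]
  simp

lemma tsum_inv_add_succ_pow_le_two (hk : 2 ≤ k) (hx : 0 ≤ x) :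
    ∑' n : ℕ, ((x + (n + 1)) ^ k)⁻¹ ≤ 2 := by
  have hle := Summable.tsum_le_tsum (inv_add_succ_pow_le hk hx) (summable_inv_add_succ_pow hk hx)
    hasSum_inv_succ_sq.summable
  rw [hasSum_inv_succ_sq.tsum_eq] at hle
  nlinarith [pi_lt_d2, pi_pos]

lemma hurwitzSeries_pos (hk : 2 ≤ k) (hx : 0 < x) : 0 < hurwitzSeries k x := by
  rw [hurwitzSeries_eq_inv_pow_add_tsum hk hx.le]
  positivity

lemma hasDerivAt_inv_add_pow (k : ℕ) {a y : ℝ} (hy : y + a ≠ 0) :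
    HasDerivAt (fun z : ℝ => ((z + a) ^ k)⁻¹) (-k * ((y + a) ^ (k + 1))⁻¹) y := by
  have h : HasDerivAt (fun z : ℝ => z + a) 1 y := (hasDerivAt_id' y).add_const a
  refine ((h.fun_pow k).fun_inv (pow_ne_zero k hy)).congr_deriv ?_
  rcases k with _ | k
  · simp
  · rw [Nat.add_sub_cancel]
    field_simp
    ring

lemma hasDerivAt_hurwitzSeries (hk : 2 ≤ k) (hx : 0 < x) :
    HasDerivAt (hurwitzSeries k) (-k * hurwitzSeries (k + 1) x) x := by
  have hx2 : 0 < x / 2 := half_pos hx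
  have hder := hasDerivAt_tsum_of_isPreconnected
    (g := fun (n : ℕ) (z : ℝ) => ((z + n) ^ k)⁻¹)
    (g' := fun (n : ℕ) (y : ℝ) => -k * ((y + n) ^ (k + 1))⁻¹)
    ((summable_inv_add_pow (k := k + 1) (by omega) hx2.le).mul_left (k : ℝ)) isOpen_Ioi
    (convex_Ioi (x / 2)).isPreconnected
    (fun n y hy => hasDerivAt_inv_add_pow k (by have := hx2.trans hy; positivity))
    (fun n y (hy : x / 2 < y) => ?_) (half_lt_self hx) (summable_inv_add_pow hk hx.le)
    (half_lt_self hx)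
  · rwa [tsum_mul_left] at hder
  · have hy0 : 0 ≤ y + n := by have := hx2.trans hy; positivity
    rw [norm_mul, norm_neg, RCLike.norm_natCast, norm_inv, norm_pow, Real.norm_of_nonneg hy0]
    gcongr

lemma hurwitzSeries_lt_mul_hurwitzSeries_succ (hk : 3 ≤ k) (hx0 : 0 < x) (hx1 : x < 1) :
    hurwitzSeries k x < k * x * hurwitzSeries (k + 1) x := by
  rw [hurwitzSeries_eq_inv_pow_add_tsum (by omega) hx0.le,
    hurwitzSeries_eq_inv_pow_add_tsum (by omega) hx0.le]
  have hu : 1 < (x ^ k)⁻¹ := one_lt_inv₀ (by positivity) |>.2 (pow_lt_one₀ hx0.le hx1 (by omega))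
  have htail := tsum_inv_add_succ_pow_le_two (k := k) (by omega) hx0.le
  have htail' : 0 ≤ k * x * ∑' n : ℕ, ((x + (n + 1)) ^ (k + 1))⁻¹ := by positivity
  have hk3 : (3 : ℝ) ≤ k := by exact_mod_cast hk
  have hxu : x * (x ^ (k + 1))⁻¹ = (x ^ k)⁻¹ := by rw [pow_succ]; field_simp
  calc (x ^ k)⁻¹ + ∑' n : ℕ, ((x + (n + 1)) ^ k)⁻¹ < 3 * (x ^ k)⁻¹ := by linarith
    _ ≤ k * (x ^ k)⁻¹ := by gcongr
    _ ≤ k * x * ((x ^ (k + 1))⁻¹ + ∑' n : ℕ, ((x + (n + 1)) ^ (k + 1))⁻¹) := by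
      rw [mul_add, mul_assoc, hxu]
      linarith

lemma strictAntiOn_mul_hurwitzSeries (hk : 3 ≤ k) :
    StrictAntiOn (fun x => x * hurwitzSeries k x) (Ioo 0 1) := by
  have hd (x : ℝ) (hx : 0 < x) : HasDerivAt (fun x => x * hurwitzSeries k x)
      (1 * hurwitzSeries k x + x * (-k * hurwitzSeries (k + 1) x)) x :=
    (hasDerivAt_id x).mul (hasDerivAt_hurwitzSeries (by omega) hx)
  refine strictAntiOn_of_deriv_neg (convex_Ioo 0 1)
    (fun x hx => (hd x hx.1).continuousAt.continuousWithinAt) fun x hx => ?_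
  rw [interior_Ioo] at hx
  rw [(hd x hx.1).deriv]
  linarith [hurwitzSeries_lt_mul_hurwitzSeries_succ hk hx.1 hx.2]

lemma hurwitzSeries_lt_mul_hurwitzSeries_sq (hk : 3 ≤ k) (hx0 : 0 < x) (hx1 : x < 1) :
    hurwitzSeries k x < x * hurwitzSeries k (x ^ 2) := by
  have hsq : x ^ 2 < x := by nlinarith
  have h := strictAntiOn_mul_hurwitzSeries hk ⟨by positivity, hsq.trans hx1⟩ ⟨hx0, hx1⟩ hsq
  exact lt_of_mul_lt_mul_left (h.trans_eq (by ring)) hx0.le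

end HurwitzSeries

lemma abs_log_one_add_sub_self_le {t : ℝ} (ht : 0 ≤ t) : |log (1 + t) - t| ≤ t ^ 2 := by
  have hupper : log (1 + t) ≤ t := by linarith [log_le_sub_one_of_pos (by linarith : 0 < 1 + t)]
  have hlower : 2 * t / (t + 2) ≤ log (1 + t) := le_log_one_add_of_nonneg ht
  rw [div_le_iff₀ (by linarith)] at hlower
  rw [abs_sub_comm, abs_of_nonneg (by linarith)]
  nlinarith [mul_nonneg ht (sq_nonneg t)]

lemma log_one_add_mul_inv_succ {y : ℝ} (hy : 0 ≤ y) (m : ℕ) :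
    log (1 + y * ((m : ℝ) + 1)⁻¹) = log (y + (m + 1)) - log (m + 1) := by
  rw [← log_div (by positivity) (by positivity)]
  congr 1
  field_simp
  ring

noncomputable def logGammaTerm (m : ℕ) (x : ℝ) : ℝ :=
  x * log (1 + ((m : ℝ) + 1)⁻¹) - log (1 + x * ((m : ℝ) + 1)⁻¹)

noncomputable def digammaTerm (m : ℕ) (x : ℝ) : ℝ :=
  log (1 + ((m : ℝ) + 1)⁻¹) - (x + ((m : ℝ) + 1))⁻¹

section EulerSeries

variable {x : ℝ}

lemma abs_logGammaTerm_le (hx : 0 ≤ x) (m : ℕ) :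
    |logGammaTerm m x| ≤ (x + x ^ 2) * (((m : ℝ) + 1) ^ 2)⁻¹ := by
  have ha : 0 ≤ ((m : ℝ) + 1)⁻¹ := by positivity
  rw [logGammaTerm, ← inv_pow]
  generalize ((m : ℝ) + 1)⁻¹ = a at ha ⊢
  calc |x * log (1 + a) - log (1 + x * a)|
        = |x * (log (1 + a) - a) - (log (1 + x * a) - x * a)| := by ring_nf
    _ ≤ x * a ^ 2 + (x * a) ^ 2 := by
        refine (abs_sub _ _).trans (add_le_add ?_ (abs_log_one_add_sub_self_le (by positivity)))
        rw [abs_mul, abs_of_nonneg hx]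
        gcongr
        exact abs_log_one_add_sub_self_le ha
    _ = (x + x ^ 2) * a ^ 2 := by ring

lemma abs_digammaTerm_le (hx : 0 ≤ x) (m : ℕ) :
    |digammaTerm m x| ≤ (1 + x) * (((m : ℝ) + 1) ^ 2)⁻¹ := by
  have hb : (0 : ℝ) < (m : ℝ) + 1 := by positivity
  rw [digammaTerm, ← inv_pow]
  generalize (m : ℝ) + 1 = b at hb ⊢
  have hsplit : b⁻¹ - (x + b)⁻¹ = x * b⁻¹ * (x + b)⁻¹ := by
    field_simp
    ring
  have h2 : |b⁻¹ - (x + b)⁻¹| ≤ x * b⁻¹ ^ 2 := by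
    rw [hsplit, abs_of_nonneg (by positivity), sq, ← mul_assoc]
    gcongr
    linarith
  calc |log (1 + b⁻¹) - (x + b)⁻¹| = |(log (1 + b⁻¹) - b⁻¹) + (b⁻¹ - (x + b)⁻¹)| := by ring_nf
    _ ≤ b⁻¹ ^ 2 + x * b⁻¹ ^ 2 :=
        (abs_add_le _ _).trans (add_le_add (abs_log_one_add_sub_self_le (by positivity)) h2)
    _ = (1 + x) * b⁻¹ ^ 2 := by ring

lemma summable_logGammaTerm (hx : 0 ≤ x) : Summable (fun m => logGammaTerm m x) :=
  .of_norm_bounded (hasSum_inv_succ_sq.summable.mul_left _) (abs_logGammaTerm_le hx)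

lemma summable_digammaTerm (hx : 0 ≤ x) : Summable (fun m => digammaTerm m x) :=
  .of_norm_bounded (hasSum_inv_succ_sq.summable.mul_left _) (abs_digammaTerm_le hx)

lemma sum_range_logGammaTerm (hx : 0 ≤ x) (n : ℕ) :
    ∑ m ∈ Finset.range n, logGammaTerm m x
      = x * log (n + 1) + log n ! - ∑ m ∈ Finset.range n, log (x + (m + 1)) := by
  induction n with
  | zero => simp
  | succ n ih =>
    have h1 := log_one_add_mul_inv_succ zero_le_one n
    rw [one_mul] at h1
    rw [Finset.sum_range_succ, ih, Finset.sum_range_succ, logGammaTerm, h1,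
      log_one_add_mul_inv_succ hx, Nat.factorial_succ, Nat.cast_mul,
      log_mul (by positivity) (by positivity)]
    push_cast
    ring_nf

lemma hasSum_logGammaTerm (hx : 0 < x) :
    HasSum (fun m => logGammaTerm m x) (log (Gamma x) + log x) := by
  rw [(summable_logGammaTerm hx.le).hasSum_iff_tendsto_nat]
  have hseq (n : ℕ) : ∑ m ∈ Finset.range n, logGammaTerm m x
      = BohrMollerup.logGammaSeq x n + log x + x * (log (n + 1) - log n) := by
    rw [sum_range_logGammaTerm hx.le, BohrMollerup.logGammaSeq, Finset.sum_range_succ']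
    push_cast
    ring_nf
  simp_rw [hseq]
  simpa using ((BohrMollerup.tendsto_log_gamma hx).add_const (log x)).add
    (tendsto_log_nat_add_one_sub_log.const_mul x)

lemma hasDerivAt_logGammaTerm (m : ℕ) (hx : 0 ≤ x) :
    HasDerivAt (logGammaTerm m) (digammaTerm m x) x := by
  have hpos : 0 < 1 + x * ((m : ℝ) + 1)⁻¹ := by positivity
  have h1 : HasDerivAt (fun z : ℝ => 1 + z * ((m : ℝ) + 1)⁻¹) ((m : ℝ) + 1)⁻¹ x := by
    simpa using ((hasDerivAt_id x).mul_const ((m : ℝ) + 1)⁻¹).const_add 1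
  refine (((hasDerivAt_id x).mul_const _).sub (h1.log hpos.ne')).congr_deriv ?_
  rw [digammaTerm]
  field_simp
  ring

lemma hasDerivAt_digammaTerm (m : ℕ) (hx : 0 ≤ x) :
    HasDerivAt (digammaTerm m) (((x + ((m : ℝ) + 1)) ^ 2)⁻¹) x := by
  have h : HasDerivAt (fun z : ℝ => z + ((m : ℝ) + 1)) 1 x := (hasDerivAt_id' x).add_const _
  refine ((h.fun_inv (by positivity)).const_sub _).congr_deriv ?_
  ring

lemma hasDerivAt_tsum_logGammaTerm (hx : 0 < x) :
    HasDerivAt (fun z => ∑' m, logGammaTerm m z) (∑' m, digammaTerm m x) x :=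
  hasDerivAt_tsum_of_isPreconnected (hasSum_inv_succ_sq.summable.mul_left (1 + (x + 1))) isOpen_Ioo
    (convex_Ioo 0 (x + 1)).isPreconnected (fun m y hy => hasDerivAt_logGammaTerm m hy.1.le)
    (fun m y hy => (abs_digammaTerm_le hy.1.le m).trans (by gcongr; linarith [hy.2]))
    ⟨hx, by linarith⟩ (summable_logGammaTerm hx.le) ⟨hx, by linarith⟩

lemma hasDerivAt_tsum_digammaTerm (hx : 0 < x) :
    HasDerivAt (fun z => ∑' m, digammaTerm m z) (∑' m : ℕ, ((x + ((m : ℝ) + 1)) ^ 2)⁻¹) x :=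
  hasDerivAt_tsum_of_isPreconnected hasSum_inv_succ_sq.summable isOpen_Ioi
    (convex_Ioi 0).isPreconnected (fun m y hy => hasDerivAt_digammaTerm m (le_of_lt hy))
    (fun m y hy => by
      rw [Real.norm_of_nonneg (by positivity)]
      exact inv_add_succ_pow_le le_rfl (le_of_lt hy) m)
    hx (summable_digammaTerm hx.le) hx

lemma digamma_eq_tsum (hx : 0 < x) : digamma x = -x⁻¹ + ∑' m, digammaTerm m x := by
  have hlogGamma : (fun z => -log z + ∑' m, logGammaTerm m z) =ᶠ[𝓝 x] fun z => log (Gamma z) := by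
    filter_upwards [Ioi_mem_nhds hx] with z hz
    rw [(hasSum_logGammaTerm hz).tsum_eq]
    ring
  exact (((hasDerivAt_log hx.ne').neg.add (hasDerivAt_tsum_logGammaTerm hx)).congr_of_eventuallyEq
    hlogGamma.symm).deriv

lemma hasDerivAt_digamma (hx : 0 < x) : HasDerivAt digamma (hurwitzSeries 2 x) x := by
  have hdigamma : (fun z => -z⁻¹ + ∑' m, digammaTerm m z) =ᶠ[𝓝 x] digamma := by
    filter_upwards [Ioi_mem_nhds hx] with z hz
    exact (digamma_eq_tsum hz).symm
  rw [hurwitzSeries_eq_inv_pow_add_tsum le_rfl hx.le]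
  refine (((hasDerivAt_inv hx.ne').neg.add (hasDerivAt_tsum_digammaTerm hx)).congr_of_eventuallyEq
    hdigamma.symm).congr_deriv ?_
  simp

end EulerSeries

lemma polygamma_eq {i : ℕ} (hi : 1 ≤ i) {x : ℝ} (hx : 0 < x) :
    polygamma i x = (-1) ^ (i + 1) * i ! * hurwitzSeries (i + 1) x := by
  induction i, hi using Nat.le_induction generalizing x with
  | base => simp [polygamma, (hasDerivAt_digamma hx).deriv]
  | succ j hj ih =>
    have hev : iteratedDeriv j digamma =ᶠ[𝓝 x]
        fun y => (-1) ^ (j + 1) * j ! * hurwitzSeries (j + 1) y := by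
      filter_upwards [Ioi_mem_nhds hx] with z hz
      exact ih hz
    rw [polygamma, iteratedDeriv_succ, hev.deriv_eq,
      ((hasDerivAt_hurwitzSeries (by omega) hx).const_mul _).deriv, Nat.factorial_succ]
    push_cast
    ring

lemma abs_polygamma {i : ℕ} (hi : 1 ≤ i) {x : ℝ} (hx : 0 < x) :
    |polygamma i x| = i ! * hurwitzSeries (i + 1) x := by
  rw [polygamma_eq hi hx, abs_mul, abs_mul, abs_pow, abs_neg, abs_one, one_pow, one_mul,
    Nat.abs_cast, abs_of_pos (hurwitzSeries_pos (by omega) hx)]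

noncomputable def gapSeries (k : ℕ) (θ : ℝ) : ℝ := 2 * hurwitzSeries k θ - hurwitzSeries k (θ ^ 2)

section GapSeries

variable {k : ℕ} {θ : ℝ}

lemma hasDerivAt_gapSeries (hk : 2 ≤ k) (hθ : 0 < θ) :
    HasDerivAt (gapSeries k)
      (2 * k * (θ * hurwitzSeries (k + 1) (θ ^ 2) - hurwitzSeries (k + 1) θ)) θ := by
  have h1 := hasDerivAt_hurwitzSeries hk hθ
  have h2 := (hasDerivAt_hurwitzSeries hk (pow_pos hθ 2)).comp (h := fun t => t ^ 2) θ
    (hasDerivAt_pow 2 θ)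
  refine ((h1.const_mul 2).sub h2).congr_deriv ?_
  push_cast
  ring

lemma continuousOn_gapSeries (hk : 2 ≤ k) : ContinuousOn (gapSeries k) (Ioi 0) :=
  fun _ hθ => (hasDerivAt_gapSeries hk hθ).continuousAt.continuousWithinAt

lemma strictMonoOn_gapSeries (hk : 2 ≤ k) : StrictMonoOn (gapSeries k) (Ioo 0 1) := by
  refine strictMonoOn_of_deriv_pos (convex_Ioo 0 1)
    ((continuousOn_gapSeries hk).mono Ioo_subset_Ioi_self) fun θ hθ => ?_
  rw [interior_Ioo] at hθ
  rw [(hasDerivAt_gapSeries hk hθ.1).deriv]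
  have hlt := hurwitzSeries_lt_mul_hurwitzSeries_sq (k := k + 1) (by omega) hθ.1 hθ.2
  have hk0 : (0 : ℝ) < k := by exact_mod_cast (by omega : 0 < k)
  exact mul_pos (by positivity) (sub_pos.2 hlt)

lemma gapSeries_le (hk : 2 ≤ k) (hθ : 0 < θ) :
    gapSeries k θ ≤ 2 * (θ⁻¹ ^ k + 2) - (θ⁻¹ ^ k) ^ 2 := by
  have htail := tsum_inv_add_succ_pow_le_two hk hθ.le
  have htail' : 0 ≤ ∑' n : ℕ, ((θ ^ 2 + (n + 1)) ^ k)⁻¹ := by positivity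
  have hsq : ((θ ^ 2) ^ k)⁻¹ = (θ⁻¹ ^ k) ^ 2 := by ring
  rw [gapSeries, hurwitzSeries_eq_inv_pow_add_tsum hk hθ.le,
    hurwitzSeries_eq_inv_pow_add_tsum hk (sq_nonneg θ), hsq, ← inv_pow]
  linarith

lemma tendsto_gapSeries_atBot (hk : 2 ≤ k) : Tendsto (gapSeries k) (𝓝[>] 0) atBot := by
  have hu : Tendsto (fun θ : ℝ => θ⁻¹ ^ k) (𝓝[>] 0) atTop :=
    (tendsto_pow_atTop (by omega)).comp tendsto_inv_nhdsGT_zero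
  refine tendsto_atBot_mono' _ ?_ (tendsto_neg_atTop_atBot.comp hu)
  filter_upwards [self_mem_nhdsWithin, hu.eventually_ge_atTop 4] with θ hθ hu4
  have := gapSeries_le hk hθ
  simp only [Function.comp_apply]
  nlinarith

end GapSeries

lemma two_mul_abs_polygamma_sub {i : ℕ} (hi : 1 ≤ i) {θ : ℝ} (hθ : 0 < θ) :
    2 * |polygamma i θ| - |polygamma i (θ ^ 2)| = i ! * gapSeries (i + 1) θ := by
  rw [abs_polygamma hi hθ, abs_polygamma hi (by positivity), gapSeries]
  ring

lemma existsUnique_eq_zero_of_strictMonoOn {f : ℝ → ℝ} {a b : ℝ} (hab : a < b)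
    (hmono : StrictMonoOn f (Ioo a b)) (hcont : ContinuousOn f (Ioc a b))
    (hbot : Tendsto f (𝓝[>] a) atBot) (hb : 0 < f b) : ∃! x, x ∈ Ioo a b ∧ f x = 0 := by
  obtain ⟨c, hfc, hc⟩ := ((hbot.eventually_lt_atBot 0).and (Ioo_mem_nhdsGT hab)).exists
  obtain ⟨x, hx, hfx⟩ := intermediate_value_Ioo hc.2.le
    (hcont.mono (Icc_subset_Ioc_iff hc.2.le |>.2 ⟨hc.1, le_rfl⟩)) ⟨hfc, hb⟩
  have hxab : x ∈ Ioo a b := ⟨hc.1.trans hx.1, hx.2⟩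
  exact ⟨x, ⟨hxab, hfx⟩, fun y ⟨hy, hfy⟩ => hmono.injOn hy hxab (hfy.trans hfx.symm)⟩

theorem stmt10 (i : ℕ) (hi : 0 < i) :
    StrictMonoOn (fun θ : ℝ => 2 * |polygamma i θ| - |polygamma i (θ ^ 2)|) (Set.Ioo 0 1) ∧
    (2 * |polygamma i 1| - |polygamma i (1 ^ 2)| = |polygamma i 1| ∧ 0 < |polygamma i 1|) ∧
    Filter.Tendsto (fun θ : ℝ => 2 * |polygamma i θ| - |polygamma i (θ ^ 2)|)
      (nhdsWithin 0 (Set.Ioi 0)) Filter.atBot ∧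
    ∃! θ : ℝ, θ ∈ Set.Ioo (0 : ℝ) 1 ∧ 2 * |polygamma i θ| - |polygamma i (θ ^ 2)| = 0 := by
  set g := fun θ : ℝ => 2 * |polygamma i θ| - |polygamma i (θ ^ 2)|
  have hk : 2 ≤ i + 1 := by omega
  have hfac : (0 : ℝ) < i ! := by positivity
  have hg : EqOn (fun θ => i ! * gapSeries (i + 1) θ) g (Ioi 0) :=
    fun θ hθ => (two_mul_abs_polygamma_sub hi hθ).symm
  have hmono : StrictMonoOn g (Ioo 0 1) := by
    have h : StrictMonoOn (fun θ => i ! * gapSeries (i + 1) θ) (Ioo 0 1) :=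
      fun a ha b hb hab => mul_lt_mul_of_pos_left (strictMonoOn_gapSeries hk ha hb hab) hfac
    exact h.congr (hg.mono Ioo_subset_Ioi_self)
  have hbot : Tendsto g (𝓝[>] 0) atBot :=
    ((tendsto_gapSeries_atBot hk).const_mul_atBot hfac).congr' (eventuallyEq_nhdsWithin_of_eqOn hg)
  have hcont : ContinuousOn g (Ioc 0 1) :=
    (continuousOn_const.mul (continuousOn_gapSeries hk)).congr hg.symm |>.mono Ioc_subset_Ioi_self
  have hpos : 0 < |polygamma i 1| := by
    rw [abs_polygamma hi one_pos]
    exact mul_pos hfac (hurwitzSeries_pos hk one_pos)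
  have hg1 : g 1 = |polygamma i 1| := by simp only [g, one_pow]; ring
  exact ⟨hmono, ⟨hg1, hpos⟩, hbot,
    existsUnique_eq_zero_of_strictMonoOn one_pos hmono hcont hbot (hpos.trans_eq hg1.symm)⟩
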